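/- Bisimulations between alternating probabilistic systems are exactly ≡^{α}-simulations between alternating multi-transition systems: fix a type A of actions. Let F_alt : Type u ⥤ Type u have object map X ↦ Multiset (A × X) ⊕ {M : Multiset (ℝ × (A × X)) // M is a probability multiset on A × X}, with action given on the left summand by Multiset.map (Prod.map id f) and on the right summand by the induced map Multiset.map (fun q => (q.1, (q.2.1, f q.2.2))). Let G_alt : Type u ⥤ Type u have object map X ↦ Finset (A × X) ⊕ {p : A × X → ℝ // p has finite support, 0 ≤ p c ≤ 1 for all c, and the sum of p over its support equals 1}, with action Finset.image (Prod.map id f) (classical decidable equality) on the left and the pushforward along Prod.map id f on the right. Let α : F_alt ⟶ G_alt have components acting as Multiset.toFinset on the left summand and as D_M (on A × X) on the right summand; α is a natural transformation with surjective components. Then for any G_alt-coalgebras b₁ : X₁ → G_alt.obj X₁, b₂ : X₂ → G_alt.obj X₂ and any F_alt-coalgebras a₁, a₂ with α.app X₁ ∘ a₁ = b₁ and α.app X₂ ∘ a₂ = b₂, a relation R : X₁ → X₂ → Prop is a G_alt-bisimulation between b₁ and b₂ iff it is a ≡^{α}-simulation between a₁ and a₂. -/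

import Mathlib

open CategoryTheory

universe u

/-- Relation lifting `Rel(F)(R)`. -/
def RelLift (F : Type u ⥤ Type u) {X Y : Type u} (R : X → Y → Prop)
    (u : F.obj X) (v : F.obj Y) : Prop :=
  ∃ w : F.obj {p : X × Y // R p.1 p.2},
    F.map (TypeCat.ofHom (fun p => p.1.1)) w = u ∧ F.map (TypeCat.ofHom (fun p => p.1.2)) w = v

/-- `R` is an `F`-bisimulation between coalgebras `c` and `d`. -/
def IsBisimulation (F : Type u ⥤ Type u) {X Y : Type u}
    (c : X → F.obj X) (d : Y → F.obj Y) (R : X → Y → Prop) : Prop :=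
  ∀ x y, R x y → RelLift F R (c x) (d y)

/-- Order-enriched relation lifting `Rel(F)_⊑(R)`. -/
def RelLiftOrd (F : Type u ⥤ Type u) (r : ∀ X : Type u, F.obj X → F.obj X → Prop)
    {X Y : Type u} (R : X → Y → Prop) (u : F.obj X) (v : F.obj Y) : Prop :=
  ∃ w : F.obj {p : X × Y // R p.1 p.2},
    r X u (F.map (TypeCat.ofHom (fun p => p.1.1)) w) ∧ r Y (F.map (TypeCat.ofHom (fun p => p.1.2)) w) v

/-- `R` is a `⊑`-simulation between coalgebras `c` and `d`. -/
def IsSimulation (F : Type u ⥤ Type u) (r : ∀ X : Type u, F.obj X → F.obj X → Prop)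
    {X Y : Type u} (c : X → F.obj X) (d : Y → F.obj Y) (R : X → Y → Prop) : Prop :=
  ∀ x y, R x y → RelLiftOrd F r R (c x) (d y)

/-- The kernel equivalence `≡^α` of a natural transformation `α : F ⟶ G`. -/
def kernelRel {F G : Type u ⥤ Type u} (α : F ⟶ G) (X : Type u) :
    F.obj X → F.obj X → Prop :=
  fun u u' => α.app X u = α.app X u'

/-- `r` is an order on the functor `F`: a functorial family of preorders. -/
def IsFunctorOrder (F : Type u ⥤ Type u)
    (r : ∀ X : Type u, F.obj X → F.obj X → Prop) : Prop :=
  (∀ (X : Type u) (u : F.obj X), r X u u) ∧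
  (∀ (X : Type u) (u v w : F.obj X), r X u v → r X v w → r X u w) ∧
  (∀ (X Y : Type u) (f : X → Y) (u u' : F.obj X), r X u u' → r Y (F.map (TypeCat.ofHom f) u) (F.map (TypeCat.ofHom f) u'))

open scoped Classical

/-- `M` is a probability multiset: all weights in `[0,1]` and total weight `1`. -/
def IsProbMultiset {X : Type u} (M : Multiset (ℝ × X)) : Prop :=
  (∀ q ∈ M, 0 ≤ q.1 ∧ q.1 ≤ 1) ∧ (M.map Prod.fst).sum = 1

/-- The discrete distribution `D_M(M)` induced by a multiset of weighted elements. -/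
noncomputable def DM {X : Type u} (M : Multiset (ℝ × X)) (x : X) : ℝ :=
  ((M.filter (fun q => q.2 = x)).map Prod.fst).sum

theorem isProbMultiset_map {X Y : Type u} (f : X → Y) (M : Multiset (ℝ × X))
    (h : IsProbMultiset M) :
    IsProbMultiset (M.map (fun q => (q.1, f q.2))) := by
  refine ⟨?_, ?_⟩
  · intro q hq
    obtain ⟨p, hp, rfl⟩ := Multiset.mem_map.mp hq
    exact h.1 p hp
  · rw [Multiset.map_map]
    exact h.2

/-- `p` is a finitely supported probability distribution. -/
def IsProbDist {X : Type u} (p : X →₀ ℝ) : Prop :=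
  (∀ x, 0 ≤ p x ∧ p x ≤ 1) ∧ ∑ x ∈ p.support, p x = 1

theorem isProbDist_mapDomain {X Y : Type u} (f : X → Y) (p : X →₀ ℝ)
    (h : IsProbDist p) : IsProbDist (Finsupp.mapDomain f p) := by
  obtain ⟨hbd, hsum⟩ := h
  have happ : ∀ y, Finsupp.mapDomain f p y = ∑ x ∈ p.support, if f x = y then p x else 0 := by
    intro y
    rw [Finsupp.mapDomain, Finsupp.sum_apply, Finsupp.sum]
    exact Finset.sum_congr rfl fun x _ => Finsupp.single_apply
  constructor
  · intro y
    rw [happ]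
    constructor
    · exact Finset.sum_nonneg fun x _ => by split <;> simp [(hbd x).1]
    · calc (∑ x ∈ p.support, if f x = y then p x else 0) ≤ ∑ x ∈ p.support, p x :=
            Finset.sum_le_sum fun x _ => by split <;> simp [(hbd x).1]
        _ = 1 := hsum
  · have key := Finsupp.sum_mapDomain_index (f := f) (s := p) (h := fun _ (m : ℝ) => m)
      (fun _ => rfl) (fun _ _ _ => rfl)
    simpa [Finsupp.sum] using key.trans (by simpa [Finsupp.sum] using hsum)

theorem DM_support_finite {X : Type u} (M : Multiset (ℝ × X)) :
    (Function.support (DM M)).Finite := by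
  apply Set.Finite.subset (M.map Prod.snd).toFinset.finite_toSet
  intro x hx
  simp only [Function.mem_support] at hx
  by_contra hmem
  apply hx
  have : M.filter (fun q => q.2 = x) = 0 := by
    rw [Multiset.filter_eq_nil]
    intro q hq hq2
    exact hmem (by simp [Multiset.mem_toFinset]; exact ⟨q.1, by rw [← hq2]; simpa using hq⟩)
  simp [DM, this]

/-- `D_M(M)` as a finitely supported function. -/
noncomputable def DMfinsupp {X : Type u} (M : Multiset (ℝ × X)) : X →₀ ℝ :=
  Finsupp.ofSupportFinite (DM M) (DM_support_finite M)

theorem DM_cons {X : Type u} (q : ℝ × X) (M : Multiset (ℝ × X)) (x : X) :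
    DM (q ::ₘ M) x = (if q.2 = x then q.1 else 0) + DM M x := by
  simp only [DM, Multiset.filter_cons]
  split <;> simp

theorem DMfinsupp_cons {X : Type u} (q : ℝ × X) (M : Multiset (ℝ × X)) :
    DMfinsupp (q ::ₘ M) = Finsupp.single q.2 q.1 + DMfinsupp M := by
  apply Finsupp.ext
  intro x
  show DM (q ::ₘ M) x = Finsupp.single q.2 q.1 x + DM M x
  rw [DM_cons, Finsupp.single_apply]

theorem DMfinsupp_zero {X : Type u} : DMfinsupp (0 : Multiset (ℝ × X)) = 0 := by
  apply Finsupp.ext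
  intro x
  show DM (0 : Multiset (ℝ × X)) x = 0
  simp [DM]

theorem DMfinsupp_natural {X Y : Type u} (f : X → Y) (M : Multiset (ℝ × X)) :
    Finsupp.mapDomain f (DMfinsupp M) = DMfinsupp (M.map (fun q => (q.1, f q.2))) := by
  induction M using Multiset.induction_on with
  | empty => simp [DMfinsupp_zero]
  | cons q M ih =>
    rw [Multiset.map_cons, DMfinsupp_cons, DMfinsupp_cons, Finsupp.mapDomain_add,
      Finsupp.mapDomain_single, ih]

theorem sum_DM {X : Type u} (M : Multiset (ℝ × X)) (S : Finset X)
    (hS : ∀ q ∈ M, q.2 ∈ S) :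
    ∑ x ∈ S, DM M x = (M.map Prod.fst).sum := by
  induction M using Multiset.induction_on with
  | empty => simp [DM]
  | cons q M ih =>
    have hq : q.2 ∈ S := hS q (Multiset.mem_cons_self q M)
    have hM : ∀ q' ∈ M, q'.2 ∈ S := fun q' h' => hS q' (Multiset.mem_cons_of_mem h')
    have hDM : ∀ x, DM (q ::ₘ M) x = (if q.2 = x then q.1 else 0) + DM M x := by
      intro x
      simp only [DM, Multiset.filter_cons]
      split <;> simp
    simp only [hDM]
    rw [Finset.sum_add_distrib, ih hM, Finset.sum_ite_eq]
    simp [hq]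

theorem isProbDist_DMfinsupp {X : Type u} (M : Multiset (ℝ × X))
    (h : IsProbMultiset M) : IsProbDist (DMfinsupp M) := by
  have hco : ∀ x, DMfinsupp M x = DM M x := fun x => rfl
  have hnn : ∀ x, 0 ≤ DM M x := by
    intro x
    apply Multiset.sum_nonneg
    intro a ha
    obtain ⟨q, hq, rfl⟩ := Multiset.mem_map.mp ha
    exact (h.1 q (Multiset.mem_of_mem_filter hq)).1
  have hle : ∀ x, DM M x ≤ 1 := by
    intro x
    have hnn' : 0 ≤ ((M.filter (fun q => ¬ q.2 = x)).map Prod.fst).sum := by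
      apply Multiset.sum_nonneg
      intro a ha
      obtain ⟨q, hq, rfl⟩ := Multiset.mem_map.mp ha
      exact (h.1 q (Multiset.mem_of_mem_filter hq)).1
    have hsplit : DM M x + ((M.filter (fun q => ¬ q.2 = x)).map Prod.fst).sum
        = (M.map Prod.fst).sum := by
      conv_rhs => rw [← Multiset.filter_add_not (fun q => q.2 = x) M]
      rw [Multiset.map_add, Multiset.sum_add]
      rfl
    have := h.2
    linarith
  refine ⟨fun x => ⟨hnn x, hle x⟩, ?_⟩
  have hsub : (DMfinsupp M).support ⊆ (M.map Prod.snd).toFinset := by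
    intro x hx
    have hx' : DM M x ≠ 0 := by
      rw [← hco x]
      exact Finsupp.mem_support_iff.mp hx
    by_contra hmem
    apply hx'
    have : M.filter (fun q => q.2 = x) = 0 := by
      rw [Multiset.filter_eq_nil]
      intro q hq hq2
      exact hmem (by simp [Multiset.mem_toFinset]; exact ⟨q.1, by rw [← hq2]; simpa using hq⟩)
    simp [DM, this]
  have hbig : ∑ x ∈ (M.map Prod.snd).toFinset, DMfinsupp M x = 1 := by
    simp only [hco]
    rw [sum_DM M _ (fun q hq => by simp [Multiset.mem_toFinset]; exact ⟨q.1, by simpa using hq⟩)]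
    exact h.2
  rw [Finset.sum_subset hsub (fun x _ hx => Finsupp.notMem_support_iff.mp hx), hbig]


/-- The alternating multi-transition functor `F_alt`: a state offers either a
multiset of labelled transitions or a probability multiset of labelled transitions. -/
noncomputable def AltMSetF (A : Type u) : Type u ⥤ Type u where
  obj X := Multiset (A × X) ⊕ {M : Multiset (ℝ × (A × X)) // IsProbMultiset M}
  map f := TypeCat.ofHom (Sum.map (Multiset.map (Prod.map id f))
    (fun M => ⟨M.1.map (fun q => (q.1, (q.2.1, f q.2.2))),
      isProbMultiset_map (Prod.map id f) M.1 M.2⟩))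
  map_id := by
    intro X
    ext u
    cases u with
    | inl m => simp [types_id]
    | inr M =>
      show Sum.inr _ = Sum.inr _
      apply congrArg; apply Subtype.ext
      simp [types_id]
  map_comp := by
    intro X Y Z f g
    ext u
    cases u with
    | inl m =>
      show Sum.inl _ = Sum.inl _
      apply congrArg
      simp [types_comp, Multiset.map_map, Prod.map_map]
    | inr M =>
      show Sum.inr _ = Sum.inr _
      apply congrArg; apply Subtype.ext
      simp [types_comp, Multiset.map_map]

/-- The alternating probabilistic functor `G_alt`: a state offers either a finite set of
labelled transitions or a finitely supported probability distribution on them. -/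
noncomputable def AltDistF (A : Type u) : Type u ⥤ Type u where
  obj X := Finset (A × X) ⊕ {p : (A × X) →₀ ℝ // IsProbDist p}
  map f := TypeCat.ofHom (Sum.map (Finset.image (Prod.map id f))
    (fun p => ⟨Finsupp.mapDomain (Prod.map id f) p.1,
      isProbDist_mapDomain (Prod.map id f) p.1 p.2⟩))
  map_id := by
    intro X
    ext u
    cases u with
    | inl s => simp [types_id]
    | inr p =>
      show Sum.inr _ = Sum.inr _
      apply congrArg; apply Subtype.ext
      simp [types_id, Finsupp.mapDomain_id]
  map_comp := by
    intro X Y Z f g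
    ext u
    cases u with
    | inl s =>
      show Sum.inl _ = Sum.inl _
      apply congrArg
      simp [types_comp, Finset.image_image, Prod.map_comp_map]
    | inr p =>
      show Sum.inr _ = Sum.inr _
      apply congrArg; apply Subtype.ext
      simp [types_comp, ← Finsupp.mapDomain_comp, Prod.map_comp_map]

/-- The natural transformation `α : F_alt ⟶ G_alt`, acting as the multiset support on
non-deterministic states and as `D_M` on probabilistic states. -/
noncomputable def alphaAlt (A : Type u) : AltMSetF.{u} A ⟶ AltDistF.{u} A where
  app X := TypeCat.ofHom (Sum.map Multiset.toFinset
    (fun M => ⟨DMfinsupp M.1, isProbDist_DMfinsupp M.1 M.2⟩))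
  naturality := by
    intro X Y f
    ext u
    cases u with
    | inl m =>
      show Sum.inl _ = Sum.inl _
      apply congrArg
      simp [Multiset.toFinset_map]
    | inr M =>
      show Sum.inr _ = Sum.inr _
      apply congrArg
      apply Subtype.ext
      exact (DMfinsupp_natural (Prod.map id f) M.1).symm

/-!
A bisimulation for `G_alt` needs a witness in `G_alt ⟨R⟩`; since `α` is surjective, such a
witness lifts to `F_alt ⟨R⟩`, and by naturality its projections are `≡^α`-equivalent to the
`a`-successors exactly when the projections of the original witness equal the `b`-successors.
So the theorem holds for any natural transformation with surjective components, and the only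
thing specific to `α_alt` is surjectivity: a distribution `p` is `D_M` of the multiset
`{(p x, x) | x ∈ supp p}`.
-/

section KernelSimulation

variable {F G : Type u ⥤ Type u} (α : F ⟶ G)

theorem relLiftOrd_kernelRel_iff {X Y : Type u} (R : X → Y → Prop)
    (hα : Function.Surjective (α.app {p : X × Y // R p.1 p.2})) (u : F.obj X) (v : F.obj Y) :
    RelLiftOrd F (kernelRel α) R u v ↔ RelLift G R (α.app X u) (α.app Y v) := by
  simp only [RelLiftOrd, RelLift, kernelRel, NatTrans.naturality_apply]
  constructor
  · rintro ⟨w, hu, hv⟩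
    exact ⟨α.app _ w, hu.symm, hv⟩
  · rintro ⟨w, hu, hv⟩
    obtain ⟨w, rfl⟩ := hα w
    exact ⟨w, hu.symm, hv⟩

theorem isSimulation_kernelRel_iff_isBisimulation (hα : ∀ X, Function.Surjective (α.app X))
    {X₁ X₂ : Type u} (a₁ : X₁ → F.obj X₁) (a₂ : X₂ → F.obj X₂) (R : X₁ → X₂ → Prop) :
    IsSimulation F (kernelRel α) a₁ a₂ R ↔
      IsBisimulation G (α.app X₁ ∘ a₁) (α.app X₂ ∘ a₂) R :=
  forall₂_congr fun _ _ => imp_congr_right fun _ => relLiftOrd_kernelRel_iff α R (hα _) _ _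

end KernelSimulation

noncomputable def Finsupp.weightedSupport {X : Type u} (p : X →₀ ℝ) : Multiset (ℝ × X) :=
  p.support.val.map fun x => (p x, x)

theorem DMfinsupp_map_pair {X : Type u} (s : Multiset X) (g : X → ℝ) :
    DMfinsupp (s.map fun x => (g x, x)) = (s.map fun x => Finsupp.single x (g x)).sum := by
  induction s using Multiset.induction_on with
  | empty => simp [DMfinsupp_zero]
  | cons a s ih => simp [DMfinsupp_cons, ih]

theorem DMfinsupp_weightedSupport {X : Type u} (p : X →₀ ℝ) :
    DMfinsupp p.weightedSupport = p := by
  rw [Finsupp.weightedSupport, DMfinsupp_map_pair]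
  exact Finsupp.sum_single p

theorem IsProbDist.isProbMultiset_weightedSupport {X : Type u} {p : X →₀ ℝ}
    (hp : IsProbDist p) : IsProbMultiset p.weightedSupport := by
  refine ⟨fun q hq => ?_, ?_⟩
  · obtain ⟨x, _, rfl⟩ := Multiset.mem_map.mp hq
    exact hp.1 x
  · rw [Finsupp.weightedSupport, Multiset.map_map]
    exact hp.2

theorem alphaAlt_surjective (A X : Type u) : Function.Surjective ((alphaAlt A).app X) := by
  rintro (s | ⟨p, hp⟩)
  · exact ⟨Sum.inl s.val, congrArg Sum.inl s.val_toFinset⟩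
  · refine ⟨Sum.inr ⟨p.weightedSupport, hp.isProbMultiset_weightedSupport⟩, ?_⟩
    exact congrArg Sum.inr (Subtype.ext (DMfinsupp_weightedSupport p))

/-- bisimulations between alternating probabilistic systems are exactly
`≡^α`-simulations between alternating multi-transition systems representing them. -/
theorem alt_bisim_iff_alt_kernel_simulation (A : Type u) {X₁ X₂ : Type u}
    (b₁ : X₁ → (AltDistF A).obj X₁) (b₂ : X₂ → (AltDistF A).obj X₂)
    (a₁ : X₁ → (AltMSetF A).obj X₁) (a₂ : X₂ → (AltMSetF A).obj X₂)
    (h₁ : (alphaAlt A).app X₁ ∘ a₁ = b₁) (h₂ : (alphaAlt A).app X₂ ∘ a₂ = b₂)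
    (R : X₁ → X₂ → Prop) :
    IsBisimulation (AltDistF A) b₁ b₂ R ↔
      IsSimulation (AltMSetF A) (kernelRel (alphaAlt A)) a₁ a₂ R := by
  subst h₁ h₂
  exact (isSimulation_kernelRel_iff_isBisimulation _ (alphaAlt_surjective A) a₁ a₂ R).symm
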